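/- Let G_0=(V,E_0) be a finite acyclic digraph and let T_1, …, T_K ⊆ V×V be pairwise disjoint finite sets of edges, each disjoint from E_0. Then a digraph C is obtainable as C_K in some sequence C_0 = G_0, C_1, …, C_K where for each t ≤ K the graph C_t is a maximal child of (C_{t−1}, T_t), if and only if there exists a list L enumerating the edges of T_1 ∪ … ∪ T_K without repetition, in which every edge of T_i precedes every edge of T_j whenever i < j, such that the greedy insertion result of L starting from G_0 (adding each edge in order if and only if the graph stays acyclic) equals C. (This is the correctness of the tier-by-tier maximal-children search for parallel-universes ranked pairs.) -/

import Mathlib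

/-- `u` reaches `v`: there is a nonempty directed path from `u` to `v` using edges in `E`. -/
def reaches {V : Type*} (E : Set (V × V)) (u v : V) : Prop :=
  Relation.TransGen (fun a b => (a, b) ∈ E) u v

/-- A digraph (with edge set `E`) is acyclic if no vertex reaches itself. -/
def Acyclic {V : Type*} (E : Set (V × V)) : Prop := ∀ v, ¬ reaches E v v

/-- A digraph contains a directed cycle if some vertex reaches itself. -/
def HasCycle {V : Type*} (E : Set (V × V)) : Prop := ∃ v, reaches E v v

/-- The digraph with edge set `C` is a maximal child of `((V,E), T)`. -/
def IsMaxChildGraph {V : Type*} (E T C : Set (V × V)) : Prop :=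
  ∃ T' ⊆ T, C = E ∪ T' ∧ Acyclic C ∧ ∀ e ∈ T \ T', HasCycle (insert e C)

open Classical in
/-- Greedy insertion: process the edges of the list in order, adding each edge
if and only if the resulting graph is still acyclic. -/
noncomputable def greedy {V : Type*} (E : Set (V × V)) : List (V × V) → Set (V × V)
  | [] => E
  | e :: rest => greedy (if Acyclic (insert e E) then insert e E else E) rest

/-!
Greedy insertion along any list enumerating a tier `T` produces a maximal child: edges are only
ever added, so an edge rejected because it closed a cycle still closes one at the end.
Conversely, a maximal child `E ∪ T'` is the greedy result of a list enumerating `T'` before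
`T \ T'`: all of `T'` is accepted since `E ∪ T'` is acyclic, and every later edge closes a cycle.
A tier-by-tier enumeration of `T 1, …, T (K + 1)` is one of the first `K` tiers followed by one
of `T (K + 1)`, and greedy insertion along a concatenation is iterated greedy insertion, so the
theorem follows by induction on `K`.
-/

section Digraph

variable {V : Type*}

lemma reaches.mono {E F : Set (V × V)} (h : E ⊆ F) {u v : V} (huv : reaches E u v) :
    reaches F u v :=
  Relation.TransGen.mono (fun _ _ hab => h hab) u v huv

lemma Acyclic.subset {E F : Set (V × V)} (hF : Acyclic F) (h : E ⊆ F) : Acyclic E :=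
  fun v hv => hF v (hv.mono h)

lemma not_acyclic_iff_hasCycle {E : Set (V × V)} : ¬ Acyclic E ↔ HasCycle E := by
  simp [Acyclic, HasCycle]

end Digraph

section Greedy

variable {V : Type*} {E : Set (V × V)} {e : V × V} {l : List (V × V)}

lemma greedy_cons_of_acyclic (h : Acyclic (insert e E)) (l : List (V × V)) :
    greedy E (e :: l) = greedy (insert e E) l := by
  simp only [greedy, if_pos h]

lemma greedy_cons_of_not_acyclic (h : ¬ Acyclic (insert e E)) (l : List (V × V)) :
    greedy E (e :: l) = greedy E l := by
  simp only [greedy, if_neg h]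

lemma greedy_append (E : Set (V × V)) (l₁ l₂ : List (V × V)) :
    greedy E (l₁ ++ l₂) = greedy (greedy E l₁) l₂ := by
  induction l₁ generalizing E with
  | nil => rfl
  | cons e l₁ ih => exact ih _

lemma subset_greedy (E : Set (V × V)) (l : List (V × V)) : E ⊆ greedy E l := by
  induction l generalizing E with
  | nil => exact subset_rfl
  | cons e l ih =>
    by_cases h : Acyclic (insert e E)
    · rw [greedy_cons_of_acyclic h]
      exact (Set.subset_insert _ _).trans (ih _)
    · rw [greedy_cons_of_not_acyclic h]
      exact ih _

lemma greedy_subset_union (E : Set (V × V)) (l : List (V × V)) :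
    greedy E l ⊆ E ∪ {e | e ∈ l} := by
  induction l generalizing E with
  | nil => simp [greedy]
  | cons e l ih =>
    have hmono : insert e E ∪ {x | x ∈ l} ⊆ E ∪ {x | x ∈ e :: l} := by
      intro x
      simp only [Set.mem_union, Set.mem_insert_iff, Set.mem_ofPred_eq, List.mem_cons]
      tauto
    by_cases h : Acyclic (insert e E)
    · rw [greedy_cons_of_acyclic h]
      exact (ih _).trans hmono
    · rw [greedy_cons_of_not_acyclic h]
      exact (ih _).trans ((Set.union_subset_union_left _ (Set.subset_insert _ _)).trans hmono)

lemma Acyclic.greedy (hE : Acyclic E) (l : List (V × V)) : Acyclic (greedy E l) := by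
  induction l generalizing E with
  | nil => exact hE
  | cons e l ih =>
    by_cases h : Acyclic (insert e E)
    · rw [greedy_cons_of_acyclic h]; exact ih h
    · rw [greedy_cons_of_not_acyclic h]; exact ih hE

lemma greedy_eq_union_of_acyclic (h : Acyclic (E ∪ {e | e ∈ l})) :
    greedy E l = E ∪ {e | e ∈ l} := by
  induction l generalizing E with
  | nil => simp [greedy]
  | cons e l ih =>
    have heq : insert e E ∪ {x | x ∈ l} = E ∪ {x | x ∈ e :: l} := by
      ext x
      simp only [Set.mem_union, Set.mem_insert_iff, Set.mem_ofPred_eq, List.mem_cons]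
      tauto
    have hins : Acyclic (insert e E) := h.subset (heq ▸ Set.subset_union_left)
    rw [greedy_cons_of_acyclic hins, ih (heq ▸ h), heq]

lemma greedy_eq_self_of_forall_hasCycle (h : ∀ e ∈ l, HasCycle (insert e E)) :
    greedy E l = E := by
  induction l with
  | nil => rfl
  | cons e l ih =>
    rw [greedy_cons_of_not_acyclic (not_acyclic_iff_hasCycle.2 (h e List.mem_cons_self))]
    exact ih fun f hf => h f (List.mem_cons_of_mem _ hf)

lemma hasCycle_insert_greedy (he : e ∈ l) (hne : e ∉ greedy E l) :
    HasCycle (insert e (greedy E l)) := by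
  induction l generalizing E with
  | nil => cases he
  | cons f l ih =>
    by_cases hf : Acyclic (insert f E)
    · rw [greedy_cons_of_acyclic hf] at hne ⊢
      rcases List.mem_cons.1 he with rfl | he
      · exact absurd (subset_greedy _ _ (Set.mem_insert _ _)) hne
      · exact ih he hne
    · rw [greedy_cons_of_not_acyclic hf] at hne ⊢
      rcases List.mem_cons.1 he with rfl | he
      · rw [← not_acyclic_iff_hasCycle]
        exact fun hc => hf (hc.subset (Set.insert_subset_insert (subset_greedy _ _)))
      · exact ih he hne

end Greedy

section MaxChild

variable {V : Type*} {E T C : Set (V × V)}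

lemma isMaxChildGraph_greedy (hE : Acyclic E) {l : List (V × V)} (hl : ∀ e, e ∈ l ↔ e ∈ T) :
    IsMaxChildGraph E T (greedy E l) := by
  refine ⟨T ∩ greedy E l, Set.inter_subset_left, ?_, hE.greedy l, ?_⟩
  · refine (Set.union_subset (subset_greedy E l) Set.inter_subset_right).antisymm' fun x hx => ?_
    rcases greedy_subset_union E l hx with hxE | hxl
    · exact Or.inl hxE
    · exact Or.inr ⟨(hl x).1 hxl, hx⟩
  · rintro e ⟨heT, heC⟩
    exact hasCycle_insert_greedy ((hl e).2 heT) fun h => heC ⟨heT, h⟩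

lemma IsMaxChildGraph.exists_greedy_eq (h : IsMaxChildGraph E T C) (hT : T.Finite) :
    ∃ l : List (V × V), l.Nodup ∧ (∀ e, e ∈ l ↔ e ∈ T) ∧ greedy E l = C := by
  obtain ⟨T', hT'T, rfl, hC, hmax⟩ := h
  let l₁ := (hT.subset hT'T).toFinset.toList
  let l₂ := (hT.sdiff (t := T')).toFinset.toList
  have hl₁ : ∀ e, e ∈ l₁ ↔ e ∈ T' := by simp [l₁]
  have hl₂ : ∀ e, e ∈ l₂ ↔ e ∈ T \ T' := by simp [l₂]
  refine ⟨l₁ ++ l₂, ?_, fun e => ?_, ?_⟩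
  · exact (Finset.nodup_toList _).append (Finset.nodup_toList _)
      fun e he₁ he₂ => ((hl₂ e).1 he₂).2 ((hl₁ e).1 he₁)
  · simp only [List.mem_append, hl₁, hl₂, Set.mem_sdiff]
    have := @hT'T e
    tauto
  · have hunion : E ∪ {e | e ∈ l₁} = E ∪ T' := by ext e; simp [hl₁]
    have hC₁ : Acyclic (E ∪ {e | e ∈ l₁}) := hunion ▸ hC
    rw [greedy_append, greedy_eq_union_of_acyclic hC₁, hunion]
    exact greedy_eq_self_of_forall_hasCycle fun e he => hmax e ((hl₂ e).1 he)

end MaxChild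

namespace List

variable {α : Type*}

theorem Nodup.pairwise_of_idxOf_lt [BEq α] [LawfulBEq α] {R : α → α → Prop} {l : List α}
    (hl : l.Nodup) (h : ∀ a ∈ l, ∀ b ∈ l, ¬ R a b → l.idxOf b < l.idxOf a) : l.Pairwise R := by
  refine pairwise_iff_getElem.2 fun i j hi hj hij => by_contra fun hR => ?_
  have := h _ (getElem_mem hi) _ (getElem_mem hj) hR
  rw [hl.idxOf_getElem, hl.idxOf_getElem] at this
  omega

theorem filter_not_append_filter_of_pairwise {p : α → Bool} {l : List α}
    (h : l.Pairwise fun a b => p a → p b) : l.filter (fun a => !p a) ++ l.filter p = l := by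
  induction l with
  | nil => rfl
  | cons x l ih =>
    rw [pairwise_cons] at h
    by_cases hx : p x
    · have hl : ∀ y ∈ l, p y := fun y hy => h.1 y hy hx
      simpa [hx, filter_eq_self.2 hl] using hl
    · simp [hx, ih h.2]

end List

lemma exists_one_le_le_succ_iff {P : ℕ → Prop} {K : ℕ} :
    (∃ t, 1 ≤ t ∧ t ≤ K + 1 ∧ P t) ↔ (∃ t, 1 ≤ t ∧ t ≤ K ∧ P t) ∨ P (K + 1) := by
  constructor
  · rintro ⟨t, h1, h2, ht⟩
    rcases Nat.le_succ_iff.1 h2 with h2 | rfl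
    · exact Or.inl ⟨t, h1, h2, ht⟩
    · exact Or.inr ht
  · rintro (⟨t, h1, h2, ht⟩ | h)
    · exact ⟨t, h1, by omega, ht⟩
    · exact ⟨K + 1, by omega, le_rfl, h⟩

lemma not_exists_lower_tier {α : Type*} {T : ℕ → Set α} {K : ℕ}
    (hdisj : ∀ s, 1 ≤ s → s ≤ K → Disjoint (T s) (T (K + 1))) {e : α} (he : e ∈ T (K + 1)) :
    ¬ ∃ t, 1 ≤ t ∧ t ≤ K ∧ e ∈ T t :=
  fun ⟨t, h1, h2, ht⟩ => Set.disjoint_left.1 (hdisj t h1 h2) ht he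

section Tiers

variable {α : Type*} [BEq α] (T : ℕ → Set α)

def IsTierEnumeration (K : ℕ) (L : List α) : Prop :=
  L.Nodup ∧ (∀ e, e ∈ L ↔ ∃ t, 1 ≤ t ∧ t ≤ K ∧ e ∈ T t) ∧
    ∀ s t, 1 ≤ s → s < t → t ≤ K → ∀ a ∈ T s, ∀ b ∈ T t, L.idxOf a < L.idxOf b

variable {T} {K : ℕ}

lemma isTierEnumeration_zero {L : List α} : IsTierEnumeration T 0 L ↔ L = [] := by
  refine ⟨fun ⟨_, hmem, _⟩ => List.eq_nil_iff_forall_not_mem.2 fun e he => ?_, ?_⟩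
  · obtain ⟨t, h1, h2, -⟩ := (hmem e).1 he
    omega
  · rintro rfl
    exact ⟨List.nodup_nil, fun e => by simp, fun s t _ _ _ => by omega⟩

variable [LawfulBEq α]

lemma IsTierEnumeration.append {L l : List α} (hL : IsTierEnumeration T K L)
    (hdisj : ∀ s, 1 ≤ s → s ≤ K → Disjoint (T s) (T (K + 1))) (hl : l.Nodup)
    (hlT : ∀ e, e ∈ l ↔ e ∈ T (K + 1)) : IsTierEnumeration T (K + 1) (L ++ l) := by
  obtain ⟨hLnd, hLT, hLord⟩ := hL
  refine ⟨hLnd.append hl fun e heL hel =>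
      not_exists_lower_tier hdisj ((hlT e).1 hel) ((hLT e).1 heL), fun e => ?_, ?_⟩
  · rw [exists_one_le_le_succ_iff, List.mem_append, hLT, hlT]
  · intro s t hs hst ht a ha b hb
    have haL : a ∈ L := (hLT a).2 ⟨s, hs, by omega, ha⟩
    rw [List.idxOf_append_of_mem haL]
    rcases Nat.le_succ_iff.1 ht with ht | rfl
    · rw [List.idxOf_append_of_mem ((hLT b).2 ⟨t, by omega, ht, hb⟩)]
      exact hLord s t hs hst ht a ha b hb
    · have hbL : b ∉ L := fun h => not_exists_lower_tier hdisj hb ((hLT b).1 h)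
      rw [List.idxOf_append_of_notMem hbL]
      exact (List.idxOf_lt_length_of_mem haL).trans_le (Nat.le_add_right _ _)

lemma IsTierEnumeration.exists_append_eq {L : List α} (hL : IsTierEnumeration T (K + 1) L)
    (hdisj : ∀ s, 1 ≤ s → s ≤ K → Disjoint (T s) (T (K + 1))) :
    ∃ L' l, IsTierEnumeration T K L' ∧ l.Nodup ∧ (∀ e, e ∈ l ↔ e ∈ T (K + 1)) ∧ L = L' ++ l := by
  classical
  obtain ⟨hnd, hmem, hord⟩ := hL
  let p : α → Bool := fun e => decide (e ∈ T (K + 1))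
  have hpw : L.Pairwise fun a b => p a → p b := hnd.pairwise_of_idxOf_lt fun a _ b hb hab => by
    simp only [p, decide_eq_true_eq, Classical.not_imp] at hab
    obtain ⟨t, h1, h2, hbt⟩ := (hmem b).1 hb
    have ht : t ≤ K := by
      rcases Nat.le_succ_iff.1 h2 with h2 | rfl
      exacts [h2, absurd hbt hab.2]
    exact hord t (K + 1) h1 (by omega) le_rfl b hbt a hab.1
  have hsplit := List.filter_not_append_filter_of_pairwise hpw
  have hmem' : ∀ e, e ∈ L.filter (fun a => !p a) ↔ ∃ t, 1 ≤ t ∧ t ≤ K ∧ e ∈ T t := by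
    intro e
    simp only [List.mem_filter, hmem, exists_one_le_le_succ_iff, p, Bool.not_eq_true',
      decide_eq_false_iff_not]
    constructor
    · rintro ⟨h | h, hn⟩
      exacts [h, absurd h hn]
    · exact fun h => ⟨Or.inl h, fun he => not_exists_lower_tier hdisj he h⟩
  refine ⟨_, _, ⟨hnd.filter _, hmem', fun s t hs hst ht a ha b hb => ?_⟩, hnd.filter _,
    fun e => ?_, hsplit.symm⟩
  · have := hord s t hs (by omega) (by omega) a ha b hb
    rwa [← hsplit, List.idxOf_append_of_mem ((hmem' a).2 ⟨s, hs, by omega, ha⟩),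
      List.idxOf_append_of_mem ((hmem' b).2 ⟨t, by omega, ht, hb⟩)] at this
  · simp only [List.mem_filter, hmem, p, decide_eq_true_eq, exists_one_le_le_succ_iff]
    tauto

lemma isTierEnumeration_succ_iff (hdisj : ∀ s, 1 ≤ s → s ≤ K → Disjoint (T s) (T (K + 1)))
    {L : List α} :
    IsTierEnumeration T (K + 1) L ↔
      ∃ L' l, IsTierEnumeration T K L' ∧ l.Nodup ∧ (∀ e, e ∈ l ↔ e ∈ T (K + 1)) ∧ L = L' ++ l :=
  ⟨fun hL => hL.exists_append_eq hdisj, fun ⟨_, _, hL', hl, hlT, hL⟩ =>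
    hL ▸ hL'.append hdisj hl hlT⟩

end Tiers

section Chain

variable {V : Type*} {E₀ : Set (V × V)} {T : ℕ → Set (V × V)} {K : ℕ} {C : Set (V × V)}

variable (E₀ T) in
def IsMaxChildChain (K : ℕ) (C : Set (V × V)) : Prop :=
  ∃ Cs : ℕ → Set (V × V), Cs 0 = E₀ ∧
    (∀ t, 1 ≤ t → t ≤ K → IsMaxChildGraph (Cs (t - 1)) (T t) (Cs t)) ∧ Cs K = C

lemma isMaxChildChain_zero : IsMaxChildChain E₀ T 0 C ↔ C = E₀ :=
  ⟨fun ⟨_, h0, _, hC⟩ => hC ▸ h0, fun h => ⟨fun _ => C, h, fun _ _ _ => by omega, rfl⟩⟩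

lemma isMaxChildChain_succ :
    IsMaxChildChain E₀ T (K + 1) C ↔
      ∃ C', IsMaxChildChain E₀ T K C' ∧ IsMaxChildGraph C' (T (K + 1)) C := by
  constructor
  · rintro ⟨Cs, h0, hstep, rfl⟩
    exact ⟨Cs K, ⟨Cs, h0, fun t h1 h2 => hstep t h1 (by omega), rfl⟩,
      hstep (K + 1) (by omega) le_rfl⟩
  · rintro ⟨C', ⟨Cs, h0, hstep, rfl⟩, hC⟩
    refine ⟨fun t => if t ≤ K then Cs t else C, by simp [h0], fun t h1 h2 => ?_, by simp⟩
    rcases Nat.le_succ_iff.1 h2 with h2 | rfl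
    · simpa [h2, show t - 1 ≤ K by omega] using hstep t h1 h2
    · simpa using hC

theorem isMaxChildChain_iff_exists_greedy [Finite V] [DecidableEq V]
    (hdisj : ∀ s t, 1 ≤ s → s < t → t ≤ K → Disjoint (T s) (T t)) (hE₀ : Acyclic E₀) :
    IsMaxChildChain E₀ T K C ↔ ∃ L, IsTierEnumeration T K L ∧ greedy E₀ L = C := by
  induction K generalizing C with
  | zero => simp [isMaxChildChain_zero, isTierEnumeration_zero, greedy, eq_comm]
  | succ K ih =>
    have ih C := @ih C fun s t hs hst ht => hdisj s t hs hst (by omega)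
    have hlast : ∀ s, 1 ≤ s → s ≤ K → Disjoint (T s) (T (K + 1)) :=
      fun s hs hsK => hdisj s (K + 1) hs (by omega) le_rfl
    simp_rw [isMaxChildChain_succ, ih, isTierEnumeration_succ_iff hlast]
    constructor
    · rintro ⟨_, ⟨L', hL', rfl⟩, hC⟩
      obtain ⟨l, hl, hlT, rfl⟩ := hC.exists_greedy_eq (Set.toFinite _)
      exact ⟨L' ++ l, ⟨L', l, hL', hl, hlT, rfl⟩, greedy_append _ _ _⟩
    · rintro ⟨_, ⟨L', l, hL', -, hlT, rfl⟩, rfl⟩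
      exact ⟨_, ⟨L', hL', rfl⟩, greedy_append E₀ L' l ▸ isMaxChildGraph_greedy (hE₀.greedy L') hlT⟩

end Chain

theorem stmt_10_general {V : Type*} [Fintype V] [DecidableEq V]
    (E₀ : Set (V × V)) (K : ℕ) (T : ℕ → Set (V × V))
    (hdisjT : ∀ s t, 1 ≤ s → s < t → t ≤ K → Disjoint (T s) (T t))
    (hacyc : Acyclic E₀) (C : Set (V × V)) :
    (∃ Cs : ℕ → Set (V × V), Cs 0 = E₀ ∧
        (∀ t, 1 ≤ t → t ≤ K → IsMaxChildGraph (Cs (t - 1)) (T t) (Cs t)) ∧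
        Cs K = C) ↔
    (∃ L : List (V × V), L.Nodup ∧
        (∀ e : V × V, e ∈ L ↔ ∃ t, 1 ≤ t ∧ t ≤ K ∧ e ∈ T t) ∧
        (∀ s t, 1 ≤ s → s < t → t ≤ K →
          ∀ a ∈ T s, ∀ b ∈ T t, L.idxOf a < L.idxOf b) ∧
        greedy E₀ L = C) := by
  simpa only [IsMaxChildChain, IsTierEnumeration, and_assoc] using
    isMaxChildChain_iff_exists_greedy (C := C) hdisjT hacyc

theorem stmt_10 {V : Type*} [Fintype V] [DecidableEq V]
    (E₀ : Set (V × V)) (K : ℕ) (T : ℕ → Set (V × V))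
    (hE₀loop : ∀ e ∈ E₀, e.1 ≠ e.2)
    (hTloop : ∀ t, 1 ≤ t → t ≤ K → ∀ e ∈ T t, e.1 ≠ e.2)
    (hdisjE : ∀ t, 1 ≤ t → t ≤ K → Disjoint E₀ (T t))
    (hdisjT : ∀ s t, 1 ≤ s → s < t → t ≤ K → Disjoint (T s) (T t))
    (hacyc : Acyclic E₀) (C : Set (V × V)) :
    (∃ Cs : ℕ → Set (V × V), Cs 0 = E₀ ∧
        (∀ t, 1 ≤ t → t ≤ K → IsMaxChildGraph (Cs (t - 1)) (T t) (Cs t)) ∧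
        Cs K = C) ↔
    (∃ L : List (V × V), L.Nodup ∧
        (∀ e : V × V, e ∈ L ↔ ∃ t, 1 ≤ t ∧ t ≤ K ∧ e ∈ T t) ∧
        (∀ s t, 1 ≤ s → s < t → t ≤ K →
          ∀ a ∈ T s, ∀ b ∈ T t, L.idxOf a < L.idxOf b) ∧
        greedy E₀ L = C) :=
  stmt_10_general E₀ K T hdisjT hacyc C
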